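/- Let Ω be a symmetric positive definite 2n×2n matrix and e = [I; I] the 2n×n stacking of two identities. Then the fused covariance P = (eᵀ Ω^{-1} e)^{-1} satisfies P ≤ P1 and P ≤ P2 in the Loewner order, where P1 and P2 are the diagonal n×n blocks of Ω. -/

import Mathlib

/-!
For any `r` with `eᴴ r = 1`, conjugating `Ω⁻¹` by the block matrix `[e | Ω r]` gives the positive
semidefinite matrix `[[eᴴ Ω⁻¹ e, 1], [1, rᴴ Ω r]]`, whose Schur complement `rᴴ Ω r - (eᴴ Ω⁻¹ e)⁻¹`
is therefore positive semidefinite (the Gauss–Markov inequality). For `e = [I; I]` the choices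
`r = [I; 0]` and `r = [0; I]` give `rᴴ Ω r = P1` and `rᴴ Ω r = P2`.
-/

open Matrix

namespace Matrix

theorem PosDef.posSemidef_conjTranspose_mul_mul_sub_inv {K m k : Type*} [Field K] [PartialOrder K]
    [StarRing K] [StarOrderedRing K] [Fintype m] [DecidableEq m] [Fintype k] [DecidableEq k]
    {Ω : Matrix m m K} (hΩ : Ω.PosDef) {e r : Matrix m k K} (he : Function.Injective e.mulVec)
    (hr : eᴴ * r = 1) :
    (rᴴ * Ω * r - (eᴴ * Ω⁻¹ * e)⁻¹).PosSemidef := by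
  have hA : (eᴴ * Ω⁻¹ * e).PosDef := hΩ.inv.conjTranspose_mul_mul_same he
  have := hA.isUnit.invertible
  have hdet : IsUnit Ω.det := (isUnit_iff_isUnit_det Ω).mp hΩ.isUnit
  have hr' : rᴴ * e = 1 := by
    rw [← conjTranspose_conjTranspose e, ← conjTranspose_mul, hr, conjTranspose_one]
  have hblocks : (fromCols e (Ω * r))ᴴ * Ω⁻¹ * fromCols e (Ω * r) =
      fromBlocks (eᴴ * Ω⁻¹ * e) 1 1ᴴ (rᴴ * Ω * r) := by
    rw [conjTranspose_fromCols_eq_fromRows_conjTranspose, fromRows_mul, fromRows_mul_fromCols,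
      conjTranspose_mul, hΩ.1.eq, conjTranspose_one]
    simp only [Matrix.mul_assoc, mul_nonsing_inv_cancel_left _ _ hdet,
      nonsing_inv_mul_cancel_left _ _ hdet, hr, hr']
  have hpsd := hΩ.inv.posSemidef.conjTranspose_mul_mul_same (fromCols e (Ω * r))
  rw [hblocks, PosDef.fromBlocks₁₁ _ _ hA] at hpsd
  simpa using hpsd

theorem fromRows_mulVec_injective_of_left {R m₁ m₂ n : Type*} [Semiring R] [Fintype n]
    {A₁ : Matrix m₁ n R} (A₂ : Matrix m₂ n R) (h : Function.Injective A₁.mulVec) :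
    Function.Injective (fromRows A₁ A₂).mulVec := fun x y hxy => by
  rw [fromRows_mulVec, fromRows_mulVec, Sum.elim_eq_iff] at hxy
  exact h hxy.1

section Blocks

variable {R m n : Type*} [Semiring R] [Fintype m] [Fintype n]

theorem transpose_fromRows_one_zero_mul_mul [DecidableEq m] (M : Matrix (m ⊕ n) (m ⊕ n) R) :
    (fromRows 1 0 : Matrix (m ⊕ n) m R)ᵀ * M * (fromRows 1 0 : Matrix (m ⊕ n) m R) =
      M.toBlocks₁₁ := by
  conv_lhs => rw [← fromBlocks_toBlocks M]
  simp [transpose_fromRows, fromCols_mul_fromBlocks, fromCols_mul_fromRows]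

theorem transpose_fromRows_zero_one_mul_mul [DecidableEq n] (M : Matrix (m ⊕ n) (m ⊕ n) R) :
    (fromRows 0 1 : Matrix (m ⊕ n) n R)ᵀ * M * (fromRows 0 1 : Matrix (m ⊕ n) n R) =
      M.toBlocks₂₂ := by
  conv_lhs => rw [← fromBlocks_toBlocks M]
  simp [transpose_fromRows, fromCols_mul_fromBlocks, fromCols_mul_fromRows]

end Blocks

end Matrix

/-- The fused covariance `(eᵀ Ω⁻¹ e)⁻¹` is below both diagonal blocks of `Ω` in the
Loewner order. -/
theorem stmt_12 {n : ℕ} (Ω : Matrix (Fin n ⊕ Fin n) (Fin n ⊕ Fin n) ℝ)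
    (hΩ : Ω.PosDef) :
    let e : Matrix (Fin n ⊕ Fin n) (Fin n) ℝ := fromRows 1 1
    let P := (eᵀ * Ω⁻¹ * e)⁻¹
    (Ω.toBlocks₁₁ - P).PosSemidef ∧ (Ω.toBlocks₂₂ - P).PosSemidef := by
  intro e P
  have he : Function.Injective e.mulVec :=
    fromRows_mulVec_injective_of_left _ (mulVec_injective_iff_isUnit.mpr isUnit_one)
  have hP (r : Matrix (Fin n ⊕ Fin n) (Fin n) ℝ) (hr : eᵀ * r = 1) :
      (rᵀ * Ω * r - P).PosSemidef := by
    simp only [← conjTranspose_eq_transpose_of_trivial] at hr ⊢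
    exact hΩ.posSemidef_conjTranspose_mul_mul_sub_inv he hr
  constructor
  · rw [← transpose_fromRows_one_zero_mul_mul Ω]
    exact hP _ (by simp [e, transpose_fromRows, fromCols_mul_fromRows])
  · rw [← transpose_fromRows_zero_one_mul_mul Ω]
    exact hP _ (by simp [e, transpose_fromRows, fromCols_mul_fromRows])
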